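/- Let E, F be normed L-spaces, and define ‖U‖_L := inf{ Σ_k ‖a_k‖‖u_k‖‖v_k‖ } over all representations U = Σ_{k=1}^n a_k · (u_k ◇ v_k) with a_k ∈ B(L), u_k ∈ L⊗E, v_k ∈ L⊗F. Then ‖·‖_L is an L-seminorm on E ⊗ F (i.e. a seminorm with ‖a · U‖_L ≤ ‖a‖‖U‖_L), it satisfies ‖u ◇ v‖_L ≤ ‖u‖‖v‖, and the induced seminorm on E ⊗ F satisfies ‖x ⊗ y‖ ≤ ‖x‖‖y‖. -/

import Mathlib

open TensorProduct

/-- The extended diamond operation `(ξ ⊗ x) ◇ (η ⊗ y) = (ξ ◇ η) ⊗ (x ⊗ y)`. -/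
noncomputable def diamondT {L E F : Type*}
    [AddCommGroup L] [Module ℂ L] [AddCommGroup E] [Module ℂ E]
    [AddCommGroup F] [Module ℂ F]
    (d : L →ₗ[ℂ] L →ₗ[ℂ] L) (u : L ⊗[ℂ] E) (v : L ⊗[ℂ] F) : L ⊗[ℂ] (E ⊗[ℂ] F) :=
  TensorProduct.map (TensorProduct.lift d) LinearMap.id
    (TensorProduct.tensorTensorTensorComm ℂ L E L F (u ⊗ₜ[ℂ] v))

/-- The general `L`-tensor norm `‖U‖_L = inf Σ ‖a_k‖‖u_k‖‖v_k‖` over representations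
`U = Σ a_k · (u_k ◇ v_k)`. -/
noncomputable def genLNorm {L E F : Type*}
    [NormedAddCommGroup L] [NormedSpace ℂ L] [AddCommGroup E] [Module ℂ E]
    [AddCommGroup F] [Module ℂ F]
    (d : L →ₗ[ℂ] L →ₗ[ℂ] L) (NE : L ⊗[ℂ] E → ℝ) (NF : L ⊗[ℂ] F → ℝ)
    (U : L ⊗[ℂ] (E ⊗[ℂ] F)) : ℝ :=
  sInf {r : ℝ | ∃ (n : ℕ) (a : Fin n → (L →L[ℂ] L))
      (u : Fin n → L ⊗[ℂ] E) (v : Fin n → L ⊗[ℂ] F),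
    U = ∑ k, LinearMap.rTensor (E ⊗[ℂ] F) ((a k : L →ₗ[ℂ] L)) (diamondT d (u k) (v k)) ∧
    r = ∑ k, ‖a k‖ * NE (u k) * NF (v k)}

/-!
`genLNorm` is an infimum of costs of representations, so each of its properties comes from an
operation on representations: concatenation gives the triangle inequality, scaling or composing
the coefficients `a k` gives homogeneity and the `B(L)`-contraction, and a one-term
representation bounds `u ◇ v`. That every `U` has a representation, so that the infimum is
over a nonempty set, uses `‖ξ ◇ ξ‖ = ‖ξ‖²`: a pure tensor `ξ ⊗ (x ⊗ y)` with `ξ ≠ 0` is the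
image of `(ξ ⊗ x) ◇ (ξ ⊗ y)` under a rank-one operator `L → L` sending `ξ ◇ ξ` to `ξ`.
-/

section

variable {L E F : Type*} [NormedAddCommGroup L] [NormedSpace ℂ L]
  [AddCommGroup E] [Module ℂ E] [AddCommGroup F] [Module ℂ F]
  (d : L →ₗ[ℂ] L →ₗ[ℂ] L) (NE : L ⊗[ℂ] E → ℝ) (NF : L ⊗[ℂ] F → ℝ)

lemma diamondT_tmul (ξ η : L) (x : E) (y : F) :
    diamondT d (ξ ⊗ₜ[ℂ] x) (η ⊗ₜ[ℂ] y) = d ξ η ⊗ₜ[ℂ] (x ⊗ₜ[ℂ] y) := by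
  simp [diamondT]

lemma exists_rTensor_diamondT_eq_tmul {e : L} (he : d e e ≠ 0) (ξ : L) (x : E) (y : F) :
    ∃ a : L →L[ℂ] L, ‖a‖ = ‖ξ‖ / ‖d e e‖ ∧
      LinearMap.rTensor (E ⊗[ℂ] F) (a : L →ₗ[ℂ] L) (diamondT d (e ⊗ₜ[ℂ] x) (e ⊗ₜ[ℂ] y)) =
        ξ ⊗ₜ[ℂ] (x ⊗ₜ[ℂ] y) := by
  have hμ : ‖d e e‖ ≠ 0 := norm_ne_zero_iff.mpr he
  obtain ⟨f, hf, hfμ⟩ := exists_dual_vector ℂ (d e e) hμ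
  refine ⟨((‖d e e‖⁻¹ : ℂ) • f).smulRight ξ, ?_, ?_⟩
  · rw [ContinuousLinearMap.norm_smulRight_apply, norm_smul, hf, norm_inv, Complex.norm_real,
      Real.norm_of_nonneg (norm_nonneg _)]
    field_simp
  · rw [diamondT_tmul, LinearMap.rTensor_tmul]
    simp [hfμ, hμ]

noncomputable def diamondSum {n : ℕ} (a : Fin n → (L →L[ℂ] L)) (u : Fin n → L ⊗[ℂ] E)
    (v : Fin n → L ⊗[ℂ] F) : L ⊗[ℂ] (E ⊗[ℂ] F) :=
  ∑ k, LinearMap.rTensor (E ⊗[ℂ] F) (a k : L →ₗ[ℂ] L) (diamondT d (u k) (v k))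

lemma diamondSum_append {n m : ℕ} (a : Fin n → (L →L[ℂ] L)) (a' : Fin m → (L →L[ℂ] L))
    (u : Fin n → L ⊗[ℂ] E) (u' : Fin m → L ⊗[ℂ] E)
    (v : Fin n → L ⊗[ℂ] F) (v' : Fin m → L ⊗[ℂ] F) :
    diamondSum d (Fin.append a a') (Fin.append u u') (Fin.append v v') =
      diamondSum d a u v + diamondSum d a' u' v' := by
  simp only [diamondSum, Fin.sum_univ_add, Fin.append_left, Fin.append_right]

lemma diamondSum_smul {n : ℕ} (c : ℂ) (a : Fin n → (L →L[ℂ] L)) (u : Fin n → L ⊗[ℂ] E)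
    (v : Fin n → L ⊗[ℂ] F) : diamondSum d (c • a) u v = c • diamondSum d a u v := by
  simp only [diamondSum, Finset.smul_sum, Pi.smul_apply, ContinuousLinearMap.toLinearMap_smul,
    LinearMap.rTensor_smul, LinearMap.smul_apply]

lemma diamondSum_comp {n : ℕ} (g : L →L[ℂ] L) (a : Fin n → (L →L[ℂ] L))
    (u : Fin n → L ⊗[ℂ] E) (v : Fin n → L ⊗[ℂ] F) :
    diamondSum d (fun k => g.comp (a k)) u v =
      LinearMap.rTensor (E ⊗[ℂ] F) (g : L →ₗ[ℂ] L) (diamondSum d a u v) := by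
  simp only [diamondSum, map_sum, ContinuousLinearMap.toLinearMap_comp, LinearMap.rTensor_comp,
    LinearMap.comp_apply]

def diamondSums : AddSubmonoid (L ⊗[ℂ] (E ⊗[ℂ] F)) where
  carrier := {U | ∃ (n : ℕ) (a : Fin n → (L →L[ℂ] L)) (u : Fin n → L ⊗[ℂ] E)
    (v : Fin n → L ⊗[ℂ] F), U = diamondSum d a u v}
  zero_mem' := ⟨0, Fin.elim0, Fin.elim0, Fin.elim0, by simp [diamondSum]⟩
  add_mem' := by
    rintro _ _ ⟨n, a, u, v, rfl⟩ ⟨m, a', u', v', rfl⟩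
    exact ⟨n + m, _, _, _, (diamondSum_append d a a' u u' v v').symm⟩

lemma tmul_mem_diamondSums (hd : ∀ ξ η : L, ‖d ξ η‖ = ‖ξ‖ * ‖η‖) (ξ : L) (x : E) (y : F) :
    ξ ⊗ₜ[ℂ] (x ⊗ₜ[ℂ] y) ∈ diamondSums d := by
  rcases eq_or_ne ξ 0 with rfl | hξ
  · rw [zero_tmul]; exact zero_mem _
  have hξξ : d ξ ξ ≠ 0 := by
    rw [← norm_ne_zero_iff, hd]
    exact mul_ne_zero (norm_ne_zero_iff.mpr hξ) (norm_ne_zero_iff.mpr hξ)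
  obtain ⟨a, -, ha⟩ := exists_rTensor_diamondT_eq_tmul d hξξ ξ x y
  exact ⟨1, fun _ => a, fun _ => ξ ⊗ₜ[ℂ] x, fun _ => ξ ⊗ₜ[ℂ] y, by simp [diamondSum, ha]⟩

lemma mem_diamondSums (hd : ∀ ξ η : L, ‖d ξ η‖ = ‖ξ‖ * ‖η‖) (U : L ⊗[ℂ] (E ⊗[ℂ] F)) :
    U ∈ diamondSums d := by
  induction U using TensorProduct.induction_on with
  | zero => exact zero_mem _
  | add U V hU hV => exact add_mem hU hV
  | tmul ξ w =>
    induction w using TensorProduct.induction_on with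
    | zero => rw [tmul_zero]; exact zero_mem _
    | add w₁ w₂ h₁ h₂ => rw [tmul_add]; exact add_mem h₁ h₂
    | tmul x y => exact tmul_mem_diamondSums d hd ξ x y

noncomputable def repCost {n : ℕ} (a : Fin n → (L →L[ℂ] L)) (u : Fin n → L ⊗[ℂ] E)
    (v : Fin n → L ⊗[ℂ] F) : ℝ :=
  ∑ k, ‖a k‖ * NE (u k) * NF (v k)

lemma repCost_append {n m : ℕ} (a : Fin n → (L →L[ℂ] L)) (a' : Fin m → (L →L[ℂ] L))
    (u : Fin n → L ⊗[ℂ] E) (u' : Fin m → L ⊗[ℂ] E)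
    (v : Fin n → L ⊗[ℂ] F) (v' : Fin m → L ⊗[ℂ] F) :
    repCost NE NF (Fin.append a a') (Fin.append u u') (Fin.append v v') =
      repCost NE NF a u v + repCost NE NF a' u' v' := by
  simp only [repCost, Fin.sum_univ_add, Fin.append_left, Fin.append_right]

lemma repCost_smul {n : ℕ} (c : ℂ) (a : Fin n → (L →L[ℂ] L)) (u : Fin n → L ⊗[ℂ] E)
    (v : Fin n → L ⊗[ℂ] F) : repCost NE NF (c • a) u v = ‖c‖ * repCost NE NF a u v := by
  simp only [repCost, Finset.mul_sum, Pi.smul_apply, norm_smul, mul_assoc]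

def repCosts (U : L ⊗[ℂ] (E ⊗[ℂ] F)) : Set ℝ :=
  {r | ∃ (n : ℕ) (a : Fin n → (L →L[ℂ] L)) (u : Fin n → L ⊗[ℂ] E) (v : Fin n → L ⊗[ℂ] F),
    U = diamondSum d a u v ∧ r = repCost NE NF a u v}

lemma genLNorm_eq_sInf_repCosts (U : L ⊗[ℂ] (E ⊗[ℂ] F)) :
    genLNorm d NE NF U = sInf (repCosts d NE NF U) :=
  rfl

lemma repCost_mem_repCosts {n : ℕ} (a : Fin n → (L →L[ℂ] L)) (u : Fin n → L ⊗[ℂ] E)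
    (v : Fin n → L ⊗[ℂ] F) : repCost NE NF a u v ∈ repCosts d NE NF (diamondSum d a u v) :=
  ⟨n, a, u, v, rfl, rfl⟩

variable {NE NF}

lemma repCost_comp_le (hE : ∀ u, 0 ≤ NE u) (hF : ∀ v, 0 ≤ NF v) {n : ℕ} (g : L →L[ℂ] L)
    (a : Fin n → (L →L[ℂ] L)) (u : Fin n → L ⊗[ℂ] E) (v : Fin n → L ⊗[ℂ] F) :
    repCost NE NF (fun k => g.comp (a k)) u v ≤ ‖g‖ * repCost NE NF a u v := by
  rw [repCost, repCost, Finset.mul_sum]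
  refine Finset.sum_le_sum fun k _ => ?_
  calc ‖g.comp (a k)‖ * NE (u k) * NF (v k) ≤ ‖g‖ * ‖a k‖ * NE (u k) * NF (v k) := by
        gcongr
        · exact hF _
        · exact hE _
        · exact g.opNorm_comp_le (a k)
    _ = ‖g‖ * (‖a k‖ * NE (u k) * NF (v k)) := by ring

lemma nonneg_of_mem_repCosts (hE : ∀ u, 0 ≤ NE u) (hF : ∀ v, 0 ≤ NF v)
    {U : L ⊗[ℂ] (E ⊗[ℂ] F)} {r : ℝ} (hr : r ∈ repCosts d NE NF U) : 0 ≤ r := by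
  obtain ⟨n, a, u, v, -, rfl⟩ := hr
  exact Finset.sum_nonneg fun k _ => by have := hE (u k); have := hF (v k); positivity

lemma bddBelow_repCosts (hE : ∀ u, 0 ≤ NE u) (hF : ∀ v, 0 ≤ NF v) (U : L ⊗[ℂ] (E ⊗[ℂ] F)) :
    BddBelow (repCosts d NE NF U) :=
  ⟨0, fun _ => nonneg_of_mem_repCosts d hE hF⟩

variable (NE NF) in
lemma repCosts_nonempty (hd : ∀ ξ η : L, ‖d ξ η‖ = ‖ξ‖ * ‖η‖) (U : L ⊗[ℂ] (E ⊗[ℂ] F)) :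
    (repCosts d NE NF U).Nonempty := by
  obtain ⟨n, a, u, v, rfl⟩ := mem_diamondSums d hd U
  exact ⟨_, repCost_mem_repCosts d NE NF a u v⟩

lemma genLNorm_le_repCost (hE : ∀ u, 0 ≤ NE u) (hF : ∀ v, 0 ≤ NF v) {U : L ⊗[ℂ] (E ⊗[ℂ] F)}
    {n : ℕ} {a : Fin n → (L →L[ℂ] L)} {u : Fin n → L ⊗[ℂ] E} {v : Fin n → L ⊗[ℂ] F}
    (hU : U = diamondSum d a u v) : genLNorm d NE NF U ≤ repCost NE NF a u v :=
  hU ▸ csInf_le (bddBelow_repCosts d hE hF _) (repCost_mem_repCosts d NE NF a u v)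

lemma genLNorm_nonneg (hE : ∀ u, 0 ≤ NE u) (hF : ∀ v, 0 ≤ NF v) (U : L ⊗[ℂ] (E ⊗[ℂ] F)) :
    0 ≤ genLNorm d NE NF U :=
  Real.sInf_nonneg fun _ => nonneg_of_mem_repCosts d hE hF

lemma genLNorm_le_mul_genLNorm (hd : ∀ ξ η : L, ‖d ξ η‖ = ‖ξ‖ * ‖η‖)
    {W U : L ⊗[ℂ] (E ⊗[ℂ] F)} {C : ℝ} (hC : 0 ≤ C)
    (h : ∀ (n : ℕ) (a : Fin n → (L →L[ℂ] L)) (u : Fin n → L ⊗[ℂ] E) (v : Fin n → L ⊗[ℂ] F),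
      U = diamondSum d a u v → genLNorm d NE NF W ≤ C * repCost NE NF a u v) :
    genLNorm d NE NF W ≤ C * genLNorm d NE NF U := by
  rw [genLNorm_eq_sInf_repCosts d NE NF U, ← smul_eq_mul, ← Real.sInf_smul_of_nonneg hC]
  refine le_csInf (repCosts_nonempty d NE NF hd U).smul_set ?_
  rintro _ ⟨_, ⟨n, a, u, v, hU, rfl⟩, rfl⟩
  exact h n a u v hU

lemma genLNorm_add_le (hd : ∀ ξ η : L, ‖d ξ η‖ = ‖ξ‖ * ‖η‖) (hE : ∀ u, 0 ≤ NE u)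
    (hF : ∀ v, 0 ≤ NF v) (U V : L ⊗[ℂ] (E ⊗[ℂ] F)) :
    genLNorm d NE NF (U + V) ≤ genLNorm d NE NF U + genLNorm d NE NF V := by
  have hU := repCosts_nonempty d NE NF hd U
  have hV := repCosts_nonempty d NE NF hd V
  rw [genLNorm_eq_sInf_repCosts, genLNorm_eq_sInf_repCosts, genLNorm_eq_sInf_repCosts,
    ← csInf_add hU (bddBelow_repCosts d hE hF U) hV (bddBelow_repCosts d hE hF V)]
  refine csInf_le_csInf (bddBelow_repCosts d hE hF _) (hU.add hV) ?_
  rintro _ ⟨_, ⟨n, a, u, v, rfl, rfl⟩, _, ⟨m, a', u', v', rfl, rfl⟩, rfl⟩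
  exact ⟨n + m, _, _, _, (diamondSum_append d a a' u u' v v').symm,
    (repCost_append NE NF a a' u u' v v').symm⟩

lemma genLNorm_smul_le (hd : ∀ ξ η : L, ‖d ξ η‖ = ‖ξ‖ * ‖η‖) (hE : ∀ u, 0 ≤ NE u)
    (hF : ∀ v, 0 ≤ NF v) (c : ℂ) (U : L ⊗[ℂ] (E ⊗[ℂ] F)) :
    genLNorm d NE NF (c • U) ≤ ‖c‖ * genLNorm d NE NF U :=
  genLNorm_le_mul_genLNorm d hd (norm_nonneg c) fun n a u v hU => by
    rw [← repCost_smul]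
    exact genLNorm_le_repCost d hE hF (by rw [hU, diamondSum_smul])

lemma genLNorm_smul (hd : ∀ ξ η : L, ‖d ξ η‖ = ‖ξ‖ * ‖η‖) (hE : ∀ u, 0 ≤ NE u)
    (hF : ∀ v, 0 ≤ NF v) (c : ℂ) (U : L ⊗[ℂ] (E ⊗[ℂ] F)) :
    genLNorm d NE NF (c • U) = ‖c‖ * genLNorm d NE NF U := by
  refine le_antisymm (genLNorm_smul_le d hd hE hF c U) ?_
  rcases eq_or_ne c 0 with rfl | hc
  · simpa using genLNorm_nonneg d hE hF _
  calc ‖c‖ * genLNorm d NE NF U = ‖c‖ * genLNorm d NE NF (c⁻¹ • c • U) := by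
        rw [inv_smul_smul₀ hc]
    _ ≤ ‖c‖ * (‖c⁻¹‖ * genLNorm d NE NF (c • U)) := by
        gcongr; exact genLNorm_smul_le d hd hE hF _ _
    _ = genLNorm d NE NF (c • U) := by
        rw [norm_inv, ← mul_assoc, mul_inv_cancel₀ (norm_ne_zero_iff.mpr hc), one_mul]

lemma genLNorm_rTensor_le (hd : ∀ ξ η : L, ‖d ξ η‖ = ‖ξ‖ * ‖η‖) (hE : ∀ u, 0 ≤ NE u)
    (hF : ∀ v, 0 ≤ NF v) (g : L →L[ℂ] L) (U : L ⊗[ℂ] (E ⊗[ℂ] F)) :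
    genLNorm d NE NF (LinearMap.rTensor (E ⊗[ℂ] F) (g : L →ₗ[ℂ] L) U) ≤
      ‖g‖ * genLNorm d NE NF U :=
  genLNorm_le_mul_genLNorm d hd (norm_nonneg g) fun _ a u v hU =>
    (genLNorm_le_repCost d hE hF (by rw [hU, diamondSum_comp])).trans
      (repCost_comp_le hE hF g a u v)

lemma genLNorm_diamondT_le (hE : ∀ u, 0 ≤ NE u) (hF : ∀ v, 0 ≤ NF v)
    (u : L ⊗[ℂ] E) (v : L ⊗[ℂ] F) : genLNorm d NE NF (diamondT d u v) ≤ NE u * NF v :=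
  calc genLNorm d NE NF (diamondT d u v)
      ≤ repCost NE NF (fun _ : Fin 1 => 1) (fun _ => u) (fun _ => v) :=
        genLNorm_le_repCost d hE hF (by simp [diamondSum, Module.End.one_eq_id])
    _ = ‖(1 : L →L[ℂ] L)‖ * (NE u * NF v) := by simp [repCost, mul_assoc]
    _ ≤ NE u * NF v := by
        have := mul_nonneg (hE u) (hF v)
        exact mul_le_of_le_one_left this ContinuousLinearMap.norm_id_le

end

lemma genLNorm_tmul_tmul_le {L E F : Type*} [NormedAddCommGroup L] [NormedSpace ℂ L]
    [NormedAddCommGroup E] [NormedSpace ℂ E] [NormedAddCommGroup F] [NormedSpace ℂ F]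
    (d : L →ₗ[ℂ] L →ₗ[ℂ] L) (hd : ∀ ξ η : L, ‖d ξ η‖ = ‖ξ‖ * ‖η‖)
    {NE : L ⊗[ℂ] E → ℝ} {NF : L ⊗[ℂ] F → ℝ} (hE : ∀ u, 0 ≤ NE u) (hF : ∀ v, 0 ≤ NF v)
    (hNEund : ∀ (ξ : L) (x : E), ‖ξ‖ = 1 → NE (ξ ⊗ₜ[ℂ] x) = ‖x‖)
    (hNFund : ∀ (ξ : L) (y : F), ‖ξ‖ = 1 → NF (ξ ⊗ₜ[ℂ] y) = ‖y‖)
    {ξ : L} (hξ : ‖ξ‖ = 1) (x : E) (y : F) :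
    genLNorm d NE NF (ξ ⊗ₜ[ℂ] (x ⊗ₜ[ℂ] y)) ≤ ‖x‖ * ‖y‖ := by
  have hξξ : ‖d ξ ξ‖ = 1 := by rw [hd, hξ, one_mul]
  have hξξ₀ : d ξ ξ ≠ 0 := by rw [← norm_ne_zero_iff, hξξ]; exact one_ne_zero
  obtain ⟨a, ha, hrep⟩ := exists_rTensor_diamondT_eq_tmul d hξξ₀ ξ x y
  calc genLNorm d NE NF (ξ ⊗ₜ[ℂ] (x ⊗ₜ[ℂ] y))
      ≤ repCost NE NF (fun _ : Fin 1 => a) (fun _ => ξ ⊗ₜ[ℂ] x) (fun _ => ξ ⊗ₜ[ℂ] y) :=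
        genLNorm_le_repCost d hE hF (by simp [diamondSum, hrep])
    _ = ‖x‖ * ‖y‖ := by simp [repCost, ha, hξ, hξξ, hNEund ξ x hξ, hNFund ξ y hξ]

theorem genLNorm_is_L_seminorm_general
    (L E F : Type*) [NormedAddCommGroup L] [NormedSpace ℂ L]
    [NormedAddCommGroup E] [NormedSpace ℂ E]
    [NormedAddCommGroup F] [NormedSpace ℂ F]
    (d : L →ₗ[ℂ] L →ₗ[ℂ] L) (hd : ∀ ξ η : L, ‖d ξ η‖ = ‖ξ‖ * ‖η‖)
    (NE : L ⊗[ℂ] E → ℝ) (NF : L ⊗[ℂ] F → ℝ)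
    (hNEadd : ∀ u v, NE (u + v) ≤ NE u + NE v)
    (hNEsmul : ∀ (c : ℂ) u, NE (c • u) = ‖c‖ * NE u)
    (hNEund : ∀ (ξ : L) (x : E), ‖ξ‖ = 1 → NE (ξ ⊗ₜ[ℂ] x) = ‖x‖)
    (hNFadd : ∀ u v, NF (u + v) ≤ NF u + NF v)
    (hNFsmul : ∀ (c : ℂ) v, NF (c • v) = ‖c‖ * NF v)
    (hNFund : ∀ (ξ : L) (y : F), ‖ξ‖ = 1 → NF (ξ ⊗ₜ[ℂ] y) = ‖y‖) :
    (∀ U : L ⊗[ℂ] (E ⊗[ℂ] F), 0 ≤ genLNorm d NE NF U) ∧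
    (∀ U V : L ⊗[ℂ] (E ⊗[ℂ] F),
      genLNorm d NE NF (U + V) ≤ genLNorm d NE NF U + genLNorm d NE NF V) ∧
    (∀ (c : ℂ) (U : L ⊗[ℂ] (E ⊗[ℂ] F)),
      genLNorm d NE NF (c • U) = ‖c‖ * genLNorm d NE NF U) ∧
    (∀ (a : L →L[ℂ] L) (U : L ⊗[ℂ] (E ⊗[ℂ] F)),
      genLNorm d NE NF (LinearMap.rTensor (E ⊗[ℂ] F) (a : L →ₗ[ℂ] L) U)
        ≤ ‖a‖ * genLNorm d NE NF U) ∧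
    (∀ (u : L ⊗[ℂ] E) (v : L ⊗[ℂ] F),
      genLNorm d NE NF (diamondT d u v) ≤ NE u * NF v) ∧
    (∀ (ξ : L) (x : E) (y : F), ‖ξ‖ = 1 →
      genLNorm d NE NF (ξ ⊗ₜ[ℂ] (x ⊗ₜ[ℂ] y)) ≤ ‖x‖ * ‖y‖) := by
  have hE : ∀ u, 0 ≤ NE u := apply_nonneg (Seminorm.of NE hNEadd hNEsmul)
  have hF : ∀ v, 0 ≤ NF v := apply_nonneg (Seminorm.of NF hNFadd hNFsmul)
  exact ⟨genLNorm_nonneg d hE hF, genLNorm_add_le d hd hE hF, genLNorm_smul d hd hE hF,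
    genLNorm_rTensor_le d hd hE hF, genLNorm_diamondT_le d hE hF,
    fun ξ x y hξ => genLNorm_tmul_tmul_le d hd hE hF hNEund hNFund hξ x y⟩

/-- `‖·‖_L` is an `L`-seminorm on `E ⊗ F` with `‖u ◇ v‖_L ≤ ‖u‖‖v‖`,
and the induced seminorm satisfies `‖x ⊗ y‖ ≤ ‖x‖‖y‖`. -/
theorem genLNorm_is_L_seminorm
    (L E F : Type*) [NormedAddCommGroup L] [NormedSpace ℂ L] [Nontrivial L]
    [NormedAddCommGroup E] [NormedSpace ℂ E]
    [NormedAddCommGroup F] [NormedSpace ℂ F]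
    (d : L →ₗ[ℂ] L →ₗ[ℂ] L) (hd : ∀ ξ η : L, ‖d ξ η‖ = ‖ξ‖ * ‖η‖)
    (NE : L ⊗[ℂ] E → ℝ) (NF : L ⊗[ℂ] F → ℝ)
    (hNE0 : ∀ u, NE u = 0 ↔ u = 0)
    (hNEadd : ∀ u v, NE (u + v) ≤ NE u + NE v)
    (hNEsmul : ∀ (c : ℂ) u, NE (c • u) = ‖c‖ * NE u)
    (hNEcontr : ∀ (a : L →L[ℂ] L) u,
      NE (LinearMap.rTensor E (a : L →ₗ[ℂ] L) u) ≤ ‖a‖ * NE u)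
    (hNEund : ∀ (ξ : L) (x : E), ‖ξ‖ = 1 → NE (ξ ⊗ₜ[ℂ] x) = ‖x‖)
    (hNF0 : ∀ v, NF v = 0 ↔ v = 0)
    (hNFadd : ∀ u v, NF (u + v) ≤ NF u + NF v)
    (hNFsmul : ∀ (c : ℂ) v, NF (c • v) = ‖c‖ * NF v)
    (hNFcontr : ∀ (a : L →L[ℂ] L) v,
      NF (LinearMap.rTensor F (a : L →ₗ[ℂ] L) v) ≤ ‖a‖ * NF v)
    (hNFund : ∀ (ξ : L) (y : F), ‖ξ‖ = 1 → NF (ξ ⊗ₜ[ℂ] y) = ‖y‖) :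
    (∀ U : L ⊗[ℂ] (E ⊗[ℂ] F), 0 ≤ genLNorm d NE NF U) ∧
    (∀ U V : L ⊗[ℂ] (E ⊗[ℂ] F),
      genLNorm d NE NF (U + V) ≤ genLNorm d NE NF U + genLNorm d NE NF V) ∧
    (∀ (c : ℂ) (U : L ⊗[ℂ] (E ⊗[ℂ] F)),
      genLNorm d NE NF (c • U) = ‖c‖ * genLNorm d NE NF U) ∧
    (∀ (a : L →L[ℂ] L) (U : L ⊗[ℂ] (E ⊗[ℂ] F)),
      genLNorm d NE NF (LinearMap.rTensor (E ⊗[ℂ] F) (a : L →ₗ[ℂ] L) U)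
        ≤ ‖a‖ * genLNorm d NE NF U) ∧
    (∀ (u : L ⊗[ℂ] E) (v : L ⊗[ℂ] F),
      genLNorm d NE NF (diamondT d u v) ≤ NE u * NF v) ∧
    (∀ (ξ : L) (x : E) (y : F), ‖ξ‖ = 1 →
      genLNorm d NE NF (ξ ⊗ₜ[ℂ] (x ⊗ₜ[ℂ] y)) ≤ ‖x‖ * ‖y‖) :=
  genLNorm_is_L_seminorm_general L E F d hd NE NF hNEadd hNEsmul hNEund hNFadd hNFsmul hNFund
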